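/- arXiv:2312.00913 — 2 statements merged into one kernel-verified Lean document; each statement's English description precedes it below -/
import Mathlib

section
/- Let M be a matroid on ground set E and ê ∈ E a coloop. Then T̂_M = ((x-1)(1 + s·t_ê) + (1 + r·t_ê)) · T̂_{M/ê}. -/
open Finset MvPolynomial

/-- A matroid on a finite ground set `E`, presented by its rank function. -/
structure FinMatroid (α : Type) [DecidableEq α] where
  E : Finset α
  rk : Finset α → ℕ
  rk_empty : rk ∅ = 0
  rk_le_card : ∀ S : Finset α, rk S ≤ S.card
  rk_mono : ∀ ⦃S T : Finset α⦄, S ⊆ T → rk S ≤ rk T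
  rk_submodular : ∀ S T : Finset α, rk (S ∪ T) + rk (S ∩ T) ≤ rk S + rk T

namespace FinMatroid

variable {α : Type} [DecidableEq α]

/-- The equivariant Tutte polynomial of `M`, evaluated at `x y r s : R` and `t : α → R`. -/
def eqTutte (M : FinMatroid α) {R : Type} [CommRing R] (x y r s : R) (t : α → R) : R :=
  ∑ S ∈ M.E.powerset,
    (x - 1) ^ (M.rk M.E - M.rk S) * (y - 1) ^ (S.card - M.rk S) *
      (∏ e ∈ S, (1 + r * t e)) * (∏ e ∈ M.E \ S, (1 + s * t e))

/-- The classical Tutte polynomial of `M`. -/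
def tutte (M : FinMatroid α) {R : Type} [CommRing R] (x y : R) : R :=
  ∑ S ∈ M.E.powerset,
    (x - 1) ^ (M.rk M.E - M.rk S) * (y - 1) ^ (S.card - M.rk S)

/-- `e` is a loop of `M`. -/
def IsLoop (M : FinMatroid α) (e : α) : Prop := M.rk {e} = 0

/-- `e` is a coloop of `M` : it belongs to every basis of `M`. -/
def IsColoop (M : FinMatroid α) (e : α) : Prop :=
  ∀ B ⊆ M.E, M.rk B = B.card → M.rk B = M.rk M.E → e ∈ B

end FinMatroid

/-!
A coloop `e` raises the rank of every `S ⊆ E \ {e}` by exactly one, so `M / e` has the same rank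
function as `M` on subsets of `E \ {e}`. Splitting the subsets of `E` according to whether they
contain `e`, a subset `S` not containing `e` picks up an extra corank factor `x - 1` and the
weight `1 + s t_e`, while `insert e S` has the same corank and nullity as `S` and picks up
`1 + r t_e`; both halves are then the state sum of `M / e`.
-/

namespace FinMatroid

variable {α : Type} [DecidableEq α] (M : FinMatroid α)

lemma rk_insert_le (S : Finset α) (a : α) : M.rk (insert a S) ≤ M.rk S + 1 := by
  have hsub := M.rk_submodular {a} S
  have ha : M.rk {a} ≤ 1 := by simpa using M.rk_le_card {a}
  rw [← insert_eq] at hsub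
  omega

lemma rk_insert_add_rk_le {a : α} {B X : Finset α} (haX : a ∉ X) (hBX : B ⊆ X) :
    M.rk (insert a X) + M.rk B ≤ M.rk (insert a B) + M.rk X := by
  have hsub := M.rk_submodular (insert a B) X
  rwa [insert_union, union_eq_right.mpr hBX, insert_inter_of_notMem haX,
    inter_eq_left.mpr hBX] at hsub

lemma exists_basis (X : Finset α) : ∃ B ⊆ X, M.rk B = B.card ∧ M.rk B = M.rk X := by
  induction X using Finset.induction_on with
  | empty => exact ⟨∅, subset_refl _, by simp [M.rk_empty], rfl⟩
  | insert a X haX ih =>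
    obtain ⟨B, hBX, hBindep, hBrk⟩ := ih
    have hle := M.rk_mono (subset_insert a X)
    have hup := M.rk_insert_le X a
    by_cases hrk : M.rk (insert a X) = M.rk X
    · exact ⟨B, hBX.trans (subset_insert a X), hBindep, hBrk.trans hrk.symm⟩
    · have haB : a ∉ B := fun h => haX (hBX h)
      have hgrow := M.rk_insert_add_rk_le haX hBX
      have hcard := M.rk_le_card (insert a B)
      rw [card_insert_of_notMem haB] at hcard
      exact ⟨insert a B, insert_subset_insert a hBX, by rw [card_insert_of_notMem haB]; omega,
        by omega⟩

namespace IsColoop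

variable {M} {e : α} (hcoloop : M.IsColoop e) (he : e ∈ M.E)
include hcoloop he

lemma rk_erase_add_one : M.rk (M.E.erase e) + 1 = M.rk M.E := by
  obtain ⟨B, hBE', hBindep, hBrk⟩ := M.exists_basis (M.E.erase e)
  have hne : M.rk (M.E.erase e) ≠ M.rk M.E := fun h =>
    notMem_erase e M.E (hBE' (hcoloop B (hBE'.trans (erase_subset e M.E)) hBindep (hBrk.trans h)))
  have hle := M.rk_mono (erase_subset e M.E)
  have hup := M.rk_insert_le (M.E.erase e) e
  rw [insert_erase he] at hup
  omega

lemma rk_insert {S : Finset α} (hS : S ⊆ M.E.erase e) : M.rk (insert e S) = M.rk S + 1 := by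
  have hgrow := M.rk_insert_add_rk_le (notMem_erase e M.E) hS
  rw [insert_erase he, ← hcoloop.rk_erase_add_one he] at hgrow
  have hup := M.rk_insert_le S e
  omega

end IsColoop

section StateSum

variable {R : Type} [CommRing R] (x y r s : R) (t : α → R)

/-- The summand of `S` in the equivariant Tutte polynomial of the restriction of `M` to `F`. -/
def eqTutteTerm (F S : Finset α) : R :=
  (x - 1) ^ (M.rk F - M.rk S) * (y - 1) ^ (S.card - M.rk S) *
    (∏ a ∈ S, (1 + r * t a)) * (∏ a ∈ F \ S, (1 + s * t a))

lemma eqTutte_eq_sum_eqTutteTerm :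
    M.eqTutte x y r s t = ∑ S ∈ M.E.powerset, M.eqTutteTerm x y r s t M.E S :=
  rfl

variable {M}

lemma eqTutteTerm_congr {N : FinMatroid α} {F S : Finset α} (hS : S ⊆ F)
    (hrk : ∀ T ⊆ F, N.rk T = M.rk T) :
    N.eqTutteTerm x y r s t F S = M.eqTutteTerm x y r s t F S := by
  rw [eqTutteTerm, eqTutteTerm, hrk S hS, hrk F subset_rfl]

variable {x y r s t} {e : α} {F : Finset α} (heF : e ∉ F)
  (hrk : ∀ T ⊆ F, M.rk (insert e T) = M.rk T + 1)
include heF hrk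

lemma eqTutteTerm_insert {S : Finset α} (hS : S ⊆ F) :
    M.eqTutteTerm x y r s t (insert e F) S =
      (x - 1) * (1 + s * t e) * M.eqTutteTerm x y r s t F S := by
  have hcorank : M.rk (insert e F) - M.rk S = M.rk F - M.rk S + 1 := by
    have := M.rk_mono hS
    rw [hrk F subset_rfl]
    omega
  rw [eqTutteTerm, eqTutteTerm, hcorank, pow_succ, insert_sdiff_of_notMem _ (fun h => heF (hS h)),
    prod_insert (fun h => heF (mem_sdiff.mp h).1)]
  ring

lemma eqTutteTerm_insert_insert {S : Finset α} (hS : S ⊆ F) :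
    M.eqTutteTerm x y r s t (insert e F) (insert e S) =
      (1 + r * t e) * M.eqTutteTerm x y r s t F S := by
  have heS : e ∉ S := fun h => heF (hS h)
  have hcorank : M.rk (insert e F) - M.rk (insert e S) = M.rk F - M.rk S := by
    rw [hrk F subset_rfl, hrk S hS]
    omega
  have hnullity : (insert e S).card - M.rk (insert e S) = S.card - M.rk S := by
    rw [card_insert_of_notMem heS, hrk S hS]
    omega
  rw [eqTutteTerm, eqTutteTerm, hcorank, hnullity, insert_sdiff_insert, sdiff_insert_of_notMem heF,
    prod_insert heS]
  ring

lemma sum_eqTutteTerm_insert :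
    ∑ S ∈ (insert e F).powerset, M.eqTutteTerm x y r s t (insert e F) S =
      ((x - 1) * (1 + s * t e) + (1 + r * t e)) *
        ∑ S ∈ F.powerset, M.eqTutteTerm x y r s t F S := by
  rw [sum_powerset_insert heF, add_mul, mul_sum, mul_sum]
  congr 1 <;> refine sum_congr rfl fun S hS => ?_
  · exact eqTutteTerm_insert heF hrk (mem_powerset.mp hS)
  · exact eqTutteTerm_insert_insert heF hrk (mem_powerset.mp hS)

end StateSum

end FinMatroid

/-- For a coloop ê:
T̂_M = ((x−1)(1 + s·t_ê) + (1 + r·t_ê))·T̂_{M/ê}. -/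
theorem eqTutte_coloop {α : Type} [DecidableEq α]
    (M Mcon : FinMatroid α) (e : α) (he : e ∈ M.E) (hcoloop : M.IsColoop e)
    (hcE : Mcon.E = M.E.erase e)
    (hcrk : ∀ S ⊆ M.E.erase e, Mcon.rk S = M.rk (insert e S) - M.rk {e})
    {R : Type} [CommRing R] (x y r s : R) (t : α → R) :
    M.eqTutte x y r s t =
      ((x - 1) * (1 + s * t e) + (1 + r * t e)) * Mcon.eqTutte x y r s t := by
  have hrk_insert : ∀ S ⊆ M.E.erase e, M.rk (insert e S) = M.rk S + 1 :=
    fun S hS => hcoloop.rk_insert he hS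
  have hrk_e : M.rk {e} = 1 := by
    simpa [M.rk_empty] using hrk_insert ∅ (empty_subset _)
  have hrk_con : ∀ S ⊆ M.E.erase e, Mcon.rk S = M.rk S := fun S hS => by
    rw [hcrk S hS, hrk_insert S hS, hrk_e, Nat.add_sub_cancel]
  conv_lhs => rw [FinMatroid.eqTutte_eq_sum_eqTutteTerm, ← insert_erase he]
  rw [FinMatroid.sum_eqTutteTerm_insert (notMem_erase e M.E) hrk_insert,
    FinMatroid.eqTutte_eq_sum_eqTutteTerm, hcE]
  congr 1
  exact sum_congr rfl fun S hS =>
    (FinMatroid.eqTutteTerm_congr x y r s t (mem_powerset.mp hS) hrk_con).symm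
end

section
/- Let M be a matroid on ground set E, A ⊆ E, and view T̂_M(x,y,r,s) over the field ℚ(x,y,r,s) with s ≠ 0 (i.e., as an identity in ℚ(x,y,r,s)[t_e : e∈E]). Substituting t_e = −1/s for all e ∈ A yields T̂_M(x,y,r,s)|_{t_e=−1/s, e∈A} = (1 − r/s)^{|A|} (y−1)^{nl_M(A)} T̂_{M/A}(x,y,r,s), where nl_M(A) = |A| − rk_M(A). -/
open Finset MvPolynomial

/-!
Since `1 + s · (-1/s) = 0`, every term of `T̂_M` indexed by a set `S` missing some `e ∈ A`
vanishes after the substitution. The surviving sets are `S' ∪ A` with `S' ⊆ E ∖ A`, and the term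
of `S' ∪ A` is `(1 - r/s)^|A| (y-1)^(|A| - rk A)` times the term of `S'` in `T̂_{M/A}`: coranks
agree, and nullity is additive because `rk (S' ∪ A) - rk A ≤ |S'|` by submodularity.
-/

theorem Finset.sum_powerset_eq_sum_powerset_sdiff_union {α β : Type} [DecidableEq α]
    [AddCommMonoid β] {A E : Finset α} (hA : A ⊆ E) (f : Finset α → β)
    (hf : ∀ S ⊆ E, ¬A ⊆ S → f S = 0) :
    ∑ S ∈ E.powerset, f S = ∑ S ∈ (E \ A).powerset, f (S ∪ A) := by
  rw [← sum_filter_of_ne fun S hS hne => not_imp_comm.mp (hf S (mem_powerset.mp hS)) hne]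
  refine sum_nbij' (· \ A) (· ∪ A) (fun S hS => ?_) (fun S hS => ?_) (fun S hS => ?_)
    (fun S hS => ?_) fun S hS => ?_
  · rw [mem_filter, mem_powerset] at hS
    exact mem_powerset.mpr (sdiff_subset_sdiff hS.1 le_rfl)
  · rw [mem_powerset] at hS
    rw [mem_filter, mem_powerset]
    exact ⟨union_subset (hS.trans sdiff_subset) hA, subset_union_right⟩
  · rw [mem_filter] at hS
    exact sdiff_union_of_subset hS.2
  · rw [mem_powerset] at hS
    exact union_sdiff_cancel_right (disjoint_sdiff.symm.mono_left hS)
  · rw [sdiff_union_of_subset (mem_filter.mp hS).2]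

namespace FinMatroid

variable {α : Type} [DecidableEq α]

theorem rk_union_le_card_add_rk (M : FinMatroid α) (S T : Finset α) :
    M.rk (S ∪ T) ≤ S.card + M.rk T := by
  have := M.rk_submodular S T
  have := M.rk_le_card S
  omega

theorem eqTutte_congr (M : FinMatroid α) {R : Type} [CommRing R] (x y r s : R)
    {t t' : α → R} (h : ∀ e ∈ M.E, t e = t' e) :
    M.eqTutte x y r s t = M.eqTutte x y r s t' := by
  refine sum_congr rfl fun S hS => ?_
  have hSE := mem_powerset.mp hS
  rw [prod_congr rfl fun e he => congrArg (1 + r * ·) (h e (hSE he)),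
    prod_congr rfl fun e he => congrArg (1 + s * ·) (h e (mem_sdiff.mp he).1)]

/-- `N` is the contraction `M / A`. -/
structure IsContraction (N M : FinMatroid α) (A : Finset α) : Prop where
  subset : A ⊆ M.E
  E_eq : N.E = M.E \ A
  rk_eq : ∀ S ⊆ M.E \ A, N.rk S = M.rk (S ∪ A) - M.rk A

namespace IsContraction

variable {N M : FinMatroid α} {A : Finset α}

theorem rk_ground (h : N.IsContraction M A) : N.rk N.E = M.rk M.E - M.rk A := by
  rw [h.rk_eq _ h.E_eq.le, h.E_eq, sdiff_union_of_subset h.subset]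

theorem corank_eq (h : N.IsContraction M A) {S : Finset α} (hS : S ⊆ N.E) :
    M.rk M.E - M.rk (S ∪ A) = N.rk N.E - N.rk S := by
  have hSA : S ∪ A ⊆ M.E := union_subset (hS.trans (h.E_eq ▸ sdiff_subset)) h.subset
  have := M.rk_mono hSA
  have := M.rk_mono (subset_union_right : A ⊆ S ∪ A)
  rw [h.rk_ground, h.rk_eq S (h.E_eq ▸ hS)]
  omega

theorem nullity_union (h : N.IsContraction M A) {S : Finset α} (hS : S ⊆ N.E) :
    (S ∪ A).card - M.rk (S ∪ A) = (S.card - N.rk S) + (A.card - M.rk A) := by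
  have hdisj : Disjoint S A := disjoint_of_subset_left (h.E_eq ▸ hS) sdiff_disjoint
  have := M.rk_union_le_card_add_rk S A
  have := M.rk_mono (subset_union_right : A ⊆ S ∪ A)
  have := M.rk_le_card A
  rw [h.rk_eq S (h.E_eq ▸ hS), card_union_of_disjoint hdisj]
  omega

theorem eqTutte_eq (h : N.IsContraction M A) {R : Type} [CommRing R] (x y r s : R)
    (t : α → R) (ht : ∀ e ∈ A, 1 + s * t e = 0) :
    M.eqTutte x y r s t =
      (∏ e ∈ A, (1 + r * t e)) * (y - 1) ^ (A.card - M.rk A) * N.eqTutte x y r s t := by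
  unfold eqTutte
  rw [sum_powerset_eq_sum_powerset_sdiff_union h.subset, ← h.E_eq, mul_sum]
  · refine sum_congr rfl fun S hS => ?_
    have hSN := mem_powerset.mp hS
    have hdisj : Disjoint S A := disjoint_of_subset_left (h.E_eq ▸ hSN) sdiff_disjoint
    have hcompl : M.E \ (S ∪ A) = N.E \ S := by
      rw [h.E_eq, sdiff_sdiff_left, sup_eq_union, union_comm]
    rw [h.corank_eq hSN, h.nullity_union hSN, prod_union hdisj, hcompl, pow_add]
    ring
  · intro S _ hAS
    obtain ⟨e, heA, heS⟩ := not_subset.mp hAS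
    rw [prod_eq_zero (mem_sdiff.mpr ⟨h.subset heA, heS⟩) (ht e heA), mul_zero]

end IsContraction

end FinMatroid

/-- Over a field with s ≠ 0, substituting t_e = −1/s for e ∈ A in
T̂_M(x,y,r,s) (as an identity in K[t_e : e ∈ E]) yields
(1 − r/s)^{|A|}·(y−1)^{nl_M(A)}·T̂_{M/A}(x,y,r,s). -/
theorem eqTutte_substitute_neg_inv_s {α : Type} [DecidableEq α]
    (M Mcon : FinMatroid α) (A : Finset α) (hA : A ⊆ M.E)
    (hcE : Mcon.E = M.E \ A)
    (hcrk : ∀ S ⊆ M.E \ A, Mcon.rk S = M.rk (S ∪ A) - M.rk A)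
    {K : Type} [Field K] (x y r s : K) (hs : s ≠ 0) :
    M.eqTutte (R := MvPolynomial α K) (MvPolynomial.C x) (MvPolynomial.C y)
        (MvPolynomial.C r) (MvPolynomial.C s)
        (fun e => if e ∈ A then MvPolynomial.C (-s⁻¹) else MvPolynomial.X e)
      = (1 - MvPolynomial.C (r / s)) ^ A.card *
          (MvPolynomial.C y - 1) ^ (A.card - M.rk A) *
          Mcon.eqTutte (MvPolynomial.C x) (MvPolynomial.C y)
            (MvPolynomial.C r) (MvPolynomial.C s) MvPolynomial.X := by
  have hcon : Mcon.IsContraction M A := ⟨hA, hcE, hcrk⟩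
  have hkill : (1 : MvPolynomial α K) + C s * C (-s⁻¹) = 0 := by
    rw [← C_mul, mul_neg, mul_inv_cancel₀ hs, map_neg, C_1, add_neg_cancel]
  have hfactor : (1 : MvPolynomial α K) + C r * C (-s⁻¹) = 1 - C (r / s) := by
    rw [← C_mul, mul_neg, ← div_eq_mul_inv, map_neg, sub_eq_add_neg]
  rw [hcon.eqTutte_eq _ _ _ _ _ fun e he => by simp only [if_pos he, hkill],
    prod_congr rfl fun e he => by rw [if_pos he, hfactor], prod_const,
    Mcon.eqTutte_congr _ _ _ _ fun e he => if_neg (mem_sdiff.mp (hcE ▸ he)).2]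
end
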